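/- The escalation strategies of the 0,1-game are full and have the right game: st_{A,∞} is full for A, st_{B,∞} is full for B, and st2g(st_{A,∞}, A) = st2g(st_{B,∞}, B) = g01. -/
import Mathlib


/-- The two agents of the game. -/
inductive Agent : Type
  | A
  | B

/-- The two choices: down and right. -/
inductive Choice : Type
  | d
  | r

/-- Payoff assignments for the agents. -/
abbrev Payoffs : Type := Agent → ℝ

/-! ### Strategy profiles: final coalgebra of `X ↦ ℝ^P + P × Choice × X × X` -/

def StratProfF : PFunctor.{0} :=
  ⟨Payoffs ⊕ (Agent × Choice), fun x =>
    match x with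
    | Sum.inl _ => Empty
    | Sum.inr _ => Bool⟩

/-- Strategy profiles: the final coalgebra (M-type) of `StratProfF`. -/
abbrev StratProf : Type := StratProfF.M

/-- Leaf strategy profile `⟨⟨f⟩⟩`. -/
def sleaf (f : Payoffs) : StratProf :=
  PFunctor.M.mk ⟨Sum.inl f, fun (e : Empty) => e.elim⟩

/-- Node strategy profile `⟨⟨p, c, s_d, s_r⟩⟩` (`true` child = down, `false` child = right). -/
def snode (p : Agent) (c : Choice) (sd sr : StratProf) : StratProf :=
  PFunctor.M.mk ⟨Sum.inr (p, c), fun (b : Bool) => if b then sd else sr⟩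

/-- Convergence `↓s`: the least predicate closed under the given rules. -/
inductive Conv : StratProf → Prop
  | leaf (f : Payoffs) : Conv (sleaf f)
  | down (p : Agent) (sd sr : StratProf) : Conv sd → Conv (snode p Choice.d sd sr)
  | right (p : Agent) (sd sr : StratProf) : Conv sr → Conv (snode p Choice.r sd sr)

/-- One step of the strong-convergence condition. -/
def SConvStep (R : StratProf → Prop) (s : StratProf) : Prop :=
  (∃ f, s = sleaf f) ∨
    ∃ p c sd sr, s = snode p c sd sr ∧ Conv s ∧ R sd ∧ R sr

/-- Strong convergence `⇓s`: the largest predicate `R` with `R ≤ SConvStep R`. -/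
def SConv (s : StratProf) : Prop :=
  ∃ R : StratProf → Prop, R s ∧ ∀ t, R t → SConvStep R t

/-- One step of the `□Φ` condition. -/
def BoxStep (Φ : StratProf → Prop) (R : StratProf → Prop) (t : StratProf) : Prop :=
  Φ t ∧ ∀ p c sd sr, t = snode p c sd sr → R sd ∧ R sr

/-- The modality `□Φ`: the largest predicate `R` with `R ≤ BoxStep Φ R`. -/
def Box (Φ : StratProf → Prop) (s : StratProf) : Prop :=
  ∃ R : StratProf → Prop, R s ∧ ∀ t, R t → BoxStep Φ R t

/-- The partial payoff function `ŝ`, as an inductively defined graph relation: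
`PayoffRel s f` means "`ŝ` is defined and equals `f`". -/
inductive PayoffRel : StratProf → Payoffs → Prop
  | leaf (f : Payoffs) : PayoffRel (sleaf f) f
  | down (p : Agent) (sd sr : StratProf) (f : Payoffs) :
      PayoffRel sd f → PayoffRel (snode p Choice.d sd sr) f
  | right (p : Agent) (sd sr : StratProf) (f : Payoffs) :
      PayoffRel sr f → PayoffRel (snode p Choice.r sd sr) f

/-- Bisimilarity `s' ~ s`: the largest relation satisfying the coinductive clauses. -/
def Bisim (s' s : StratProf) : Prop :=
  ∃ R : StratProf → StratProf → Prop, R s' s ∧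
    ∀ t' t, R t' t →
      ((∃ f, t' = sleaf f ∧ t = sleaf f) ∨
        ∃ p c td' tr' td tr,
          t' = snode p c td' tr' ∧ t = snode p c td tr ∧ R td' td ∧ R tr' tr)

/-- The subprofile relation `s' ≼ s`: the least relation closed under the given rules. -/
inductive Subprof : StratProf → StratProf → Prop
  | bisim {s' s : StratProf} : Bisim s' s → Subprof s' s
  | down {s' : StratProf} {p : Agent} {c : Choice} {sd sr : StratProf} :
      Subprof s' sd → Subprof s' (snode p c sd sr)
  | right {s' : StratProf} {p : Agent} {c : Choice} {sd sr : StratProf} :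
      Subprof s' sr → Subprof s' (snode p c sd sr)

/-! ### Games: final coalgebra of `X ↦ ℝ^P + P × X × X` -/

def GameF : PFunctor.{0} :=
  ⟨Payoffs ⊕ Agent, fun x =>
    match x with
    | Sum.inl _ => Empty
    | Sum.inr _ => Bool⟩

/-- Games: the final coalgebra (M-type) of `GameF`. -/
abbrev Game : Type := GameF.M

/-- Leaf game `⟨f⟩`. -/
def gleaf (f : Payoffs) : Game :=
  PFunctor.M.mk ⟨Sum.inl f, fun (e : Empty) => e.elim⟩

/-- Node game `⟨p, g_d, g_r⟩`. -/
def gnode (p : Agent) (gd gr : Game) : Game :=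
  PFunctor.M.mk ⟨Sum.inr p, fun (b : Bool) => if b then gd else gr⟩

/-- The corecursive function `game : StratProf → Game` erasing the choices. -/
def gameOf : StratProf → Game :=
  PFunctor.M.corec (fun s =>
    match PFunctor.M.dest s with
    | ⟨Sum.inl f, _⟩ => ⟨Sum.inl f, fun (e : Empty) => e.elim⟩
    | ⟨Sum.inr pc, k⟩ => ⟨Sum.inr pc.1, k⟩)

/-! ### Strategies: final coalgebra of `X ↦ ℝ^P + (P + Choice) × X × X` -/

def StratF : PFunctor.{0} :=
  ⟨Payoffs ⊕ (Agent ⊕ Choice), fun x =>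
    match x with
    | Sum.inl _ => Empty
    | Sum.inr _ => Bool⟩

/-- Strategies: the final coalgebra (M-type) of `StratF`. -/
abbrev Strat : Type := StratF.M

/-- Leaf strategy `⟨f⟩`. -/
def stleaf (f : Payoffs) : Strat :=
  PFunctor.M.mk ⟨Sum.inl f, fun (e : Empty) => e.elim⟩

/-- Node strategy `⟨x, st₁, st₂⟩` with `x` an agent or a choice. -/
def stnode (x : Agent ⊕ Choice) (s1 s2 : Strat) : Strat :=
  PFunctor.M.mk ⟨Sum.inr x, fun (b : Bool) => if b then s1 else s2⟩

/-- The corecursive function `st2g` replacing choice labels by the given agent. -/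
def st2gStep (p : Agent) (t : Strat) : GameF.Obj Strat :=
  match PFunctor.M.dest t with
  | ⟨Sum.inl f, _⟩ => ⟨Sum.inl f, fun (e : Empty) => e.elim⟩
  | ⟨Sum.inr (Sum.inl q), k⟩ => ⟨Sum.inr q, k⟩
  | ⟨Sum.inr (Sum.inr _), k⟩ => ⟨Sum.inr p, k⟩

/-- The corecursive function `st2g` replacing choice labels by the given agent. -/
def st2g (st : Strat) (p : Agent) : Game :=
  PFunctor.M.corec (st2gStep p) st

/-- `st` is full for `p`: coinductively, the agent `p` occurs nowhere as a label. -/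
def Full (p : Agent) (st : Strat) : Prop :=
  ∃ R : Strat → Prop, R st ∧ ∀ t, R t →
    (∃ f, t = stleaf f) ∨
      ∃ x s1 s2, t = stnode x s1 s2 ∧ x ≠ Sum.inl p ∧ R s1 ∧ R s2

/-- A one-level view of a strategy. -/
inductive StratView : Type
  | leaf (f : Payoffs)
  | node (x : Agent ⊕ Choice) (k : Bool → Strat)

/-- Destruct a strategy into its one-level view. -/
def stratView (t : Strat) : StratView :=
  match PFunctor.M.dest t with
  | ⟨Sum.inl f, _⟩ => StratView.leaf f
  | ⟨Sum.inr x, k⟩ => StratView.node x k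

/-- One corecursion step for the sum of the strategy of `A` (first component)
and the strategy of `B` (second component). -/
def oplusStep : Strat × Strat → StratProfF.Obj (Strat × Strat) := fun q =>
  match stratView q.1, stratView q.2 with
  | StratView.leaf f, _ => ⟨Sum.inl f, fun (e : Empty) => e.elim⟩
  | StratView.node _ _, StratView.leaf f => ⟨Sum.inl f, fun (e : Empty) => e.elim⟩
  | StratView.node (Sum.inr c) k1, StratView.node (Sum.inl p') k2 =>
      ⟨Sum.inr (p', c), fun (b : Bool) => (k1 b, k2 b)⟩
  | StratView.node (Sum.inr c) k1, StratView.node (Sum.inr _) k2 =>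
      ⟨Sum.inr (Agent.A, c), fun (b : Bool) => (k1 b, k2 b)⟩
  | StratView.node (Sum.inl p') k1, StratView.node (Sum.inr c) k2 =>
      ⟨Sum.inr (p', c), fun (b : Bool) => (k1 b, k2 b)⟩
  | StratView.node (Sum.inl p') k1, StratView.node (Sum.inl _) k2 =>
      ⟨Sum.inr (p', Choice.d), fun (b : Bool) => (k1 b, k2 b)⟩

/-- The sum `st_A ⊕ st_B` of the strategies of the two agents. -/
def oplus (stA stB : Strat) : StratProf :=
  PFunctor.M.corec oplusStep (stA, stB)

/-! ### Equilibria -/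

/-- The local equilibrium condition `PE`. -/
def PE (s : StratProf) : Prop :=
  SConv s ∧
    (∀ p sd sr fd fr, s = snode p Choice.d sd sr →
        PayoffRel sd fd → PayoffRel sr fr → fd p ≥ fr p) ∧
    (∀ p sd sr fd fr, s = snode p Choice.r sd sr →
        PayoffRel sd fd → PayoffRel sr fr → fr p ≥ fd p)

/-- Subgame perfect equilibrium: `SPE = □PE`. -/
def SPE : StratProf → Prop := Box PE

/-- Convertibility `s ⊢p⊣ s'`: the inductively defined deviation relation of agent `p`. -/
inductive Convert (p : Agent) : StratProf → StratProf → Prop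
  | bisim {s s' : StratProf} : Bisim s s' → Convert p s s'
  | own {c c' : Choice} {s1 s2 s1' s2' : StratProf} :
      Convert p s1 s1' → Convert p s2 s2' →
      Convert p (snode p c s1 s2) (snode p c' s1' s2')
  | other {p' : Agent} {c : Choice} {s1 s2 s1' s2' : StratProf} :
      Convert p s1 s1' → Convert p s2 s2' →
      Convert p (snode p' c s1 s2) (snode p' c s1' s2')

/-- Nash equilibrium: no agent can improve her payoff by converting
(the inequality being required whenever both payoffs are defined). -/
def Nash (s : StratProf) : Prop :=
  ∀ p s' f f', Convert p s s' → PayoffRel s f → PayoffRel s' f' → f p ≥ f' p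

/-! ### The 0,1-game -/

/-- The payoff function `A ↦ 0, B ↦ 1`. -/
def f01 : Payoffs := fun p => match p with | Agent.A => 0 | Agent.B => 1

/-- The payoff function `A ↦ 1, B ↦ 0`. -/
def f10 : Payoffs := fun p => match p with | Agent.A => 1 | Agent.B => 0

/-- `S01 true = S0` and `S01 false = S1`: the largest pair of predicates
characterizing the strategy profiles of the 0,1-game. -/
def S01 (i : Bool) (s : StratProf) : Prop :=
  ∃ R : Bool → StratProf → Prop, R i s ∧
    (∀ t, R true t → ∃ c s', t = snode Agent.A c (sleaf f01) s' ∧ R false s') ∧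
    (∀ t, R false t → ∃ c s', t = snode Agent.B c (sleaf f10) s' ∧ R true s')

def S0 : StratProf → Prop := S01 true
def S1 : StratProf → Prop := S01 false

/-- One step of the `AcBes` condition. -/
def AcBesStep (R : StratProf → Prop) (s : StratProf) : Prop :=
  ∀ p c f s', s = snode p c (sleaf f) s' →
    (p = Agent.A ∧ f = f01 ∧ c = Choice.r ∧ R s') ∨
    (p = Agent.B ∧ f = f10 ∧ (c = Choice.d ∨ R s'))

/-- `AcBes`: "A continues and B eventually stops", the least predicate `R`
such that `AcBesStep R ≤ R` (impredicative encoding of the least fixed point). -/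
def AcBes (s : StratProf) : Prop :=
  ∀ R : StratProf → Prop, (∀ t, AcBesStep R t → R t) → R s

/-- One step of the `BcAes` condition. -/
def BcAesStep (R : StratProf → Prop) (s : StratProf) : Prop :=
  ∀ p c f s', s = snode p c (sleaf f) s' →
    (p = Agent.B ∧ f = f10 ∧ c = Choice.r ∧ R s') ∨
    (p = Agent.A ∧ f = f01 ∧ (c = Choice.d ∨ R s'))

/-- `BcAes`: "B continues and A eventually stops", symmetric to `AcBes`. -/
def BcAes (s : StratProf) : Prop :=
  ∀ R : StratProf → Prop, (∀ t, BcAesStep R t → R t) → R s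

def SAcBes : StratProf → Prop := Box AcBes
def SBcAes : StratProf → Prop := Box BcAes

/-! ### The 0,1-game `g01`, the escalation strategies and the all-continue profile -/

/-- Corecursion step for `g01` and `g10`:
`inl true ↦ g01`, `inl false ↦ g10`, `inr true ↦ ⟨f01⟩`, `inr false ↦ ⟨f10⟩`. -/
def g01Step : Bool ⊕ Bool → GameF.Obj (Bool ⊕ Bool)
  | Sum.inl true => ⟨Sum.inr Agent.A, fun (b : Bool) => if b then Sum.inr true else Sum.inl false⟩
  | Sum.inl false => ⟨Sum.inr Agent.B, fun (b : Bool) => if b then Sum.inr false else Sum.inl true⟩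
  | Sum.inr true => ⟨Sum.inl f01, fun (e : Empty) => e.elim⟩
  | Sum.inr false => ⟨Sum.inl f10, fun (e : Empty) => e.elim⟩

/-- The 0,1-game: `g01 = ⟨A, ⟨f01⟩, g10⟩` where `g10 = ⟨B, ⟨f10⟩, g01⟩`. -/
def g01 : Game := PFunctor.M.corec g01Step (Sum.inl true)

/-- `g10 = ⟨B, ⟨f10⟩, g01⟩`. -/
def g10 : Game := PFunctor.M.corec g01Step (Sum.inl false)

/-- Corecursion step for `st_{A,∞} = ⟨r, ⟨f01⟩, ⟨B, ⟨f10⟩, st_{A,∞}⟩⟩`. -/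
def stAinfStep : ℕ → StratF.Obj ℕ
  | 0 => ⟨Sum.inr (Sum.inr Choice.r), fun (b : Bool) => if b then 2 else 1⟩
  | 1 => ⟨Sum.inr (Sum.inl Agent.B), fun (b : Bool) => if b then 3 else 0⟩
  | 2 => ⟨Sum.inl f01, fun (e : Empty) => e.elim⟩
  | _ => ⟨Sum.inl f10, fun (e : Empty) => e.elim⟩

/-- The escalation strategy of `A`: `st_{A,∞} = ⟨r, ⟨f01⟩, ⟨B, ⟨f10⟩, st_{A,∞}⟩⟩`. -/
def stAinf : Strat := PFunctor.M.corec stAinfStep 0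

/-- Corecursion step for `st_{B,∞} = ⟨A, ⟨f01⟩, ⟨r, ⟨f10⟩, st_{B,∞}⟩⟩`. -/
def stBinfStep : ℕ → StratF.Obj ℕ
  | 0 => ⟨Sum.inr (Sum.inl Agent.A), fun (b : Bool) => if b then 2 else 1⟩
  | 1 => ⟨Sum.inr (Sum.inr Choice.r), fun (b : Bool) => if b then 3 else 0⟩
  | 2 => ⟨Sum.inl f01, fun (e : Empty) => e.elim⟩
  | _ => ⟨Sum.inl f10, fun (e : Empty) => e.elim⟩

/-- The escalation strategy of `B`: `st_{B,∞} = ⟨A, ⟨f01⟩, ⟨r, ⟨f10⟩, st_{B,∞}⟩⟩`. -/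
def stBinf : Strat := PFunctor.M.corec stBinfStep 0

/-- Corecursion step for the all-continue profile
`s_{A,∞} = ⟨⟨A, r, ⟨⟨f01⟩⟩, s_{B,∞}⟩⟩`, `s_{B,∞} = ⟨⟨B, r, ⟨⟨f10⟩⟩, s_{A,∞}⟩⟩`. -/
def sAinfStep : ℕ → StratProfF.Obj ℕ
  | 0 => ⟨Sum.inr (Agent.A, Choice.r), fun (b : Bool) => if b then 2 else 1⟩
  | 1 => ⟨Sum.inr (Agent.B, Choice.r), fun (b : Bool) => if b then 3 else 0⟩
  | 2 => ⟨Sum.inl f01, fun (e : Empty) => e.elim⟩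
  | _ => ⟨Sum.inl f10, fun (e : Empty) => e.elim⟩

/-- The all-continue profile `s_{A,∞}` of the 0,1-game. -/
def sAinf : StratProf := PFunctor.M.corec sAinfStep 0

/-- The profile `s_{B,∞}`. -/
def sBinf : StratProf := PFunctor.M.corec sAinfStep 1

/-- `s_□r`, the profile of the 0,1-game where both agents continue forever
(it satisfies `s_□r = ⟨⟨A, r, ⟨⟨f01⟩⟩, ⟨⟨B, r, ⟨⟨f10⟩⟩, s_□r⟩⟩⟩⟩`). -/
def sBoxr : StratProf := sAinf

/-- `s_{d□r} = ⟨⟨A, d, ⟨⟨f01⟩⟩, ⟨⟨B, r, ⟨⟨f10⟩⟩, s_□r⟩⟩⟩⟩`. -/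
def sdBoxr : StratProf :=
  snode Agent.A Choice.d (sleaf f01) (snode Agent.B Choice.r (sleaf f10) sBoxr)

/-! ### Finite games and profiles -/

/-- Finite strategy profiles. -/
inductive FinStratProf : Type
  | leaf (f : Payoffs)
  | node (p : Agent) (c : Choice) (sd sr : FinStratProf)

/-- Finite games. -/
inductive FinGame : Type
  | leaf (f : Payoffs)
  | node (p : Agent) (gd gr : FinGame)

/-- The (total) payoff function of a finite strategy profile. -/
def fpayoff : FinStratProf → Payoffs
  | FinStratProf.leaf f => f
  | FinStratProf.node _ Choice.d sd _ => fpayoff sd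
  | FinStratProf.node _ Choice.r _ sr => fpayoff sr

/-- The game of a finite strategy profile (erasing the choices). -/
def fgame : FinStratProf → FinGame
  | FinStratProf.leaf f => FinGame.leaf f
  | FinStratProf.node p _ sd sr => FinGame.node p (fgame sd) (fgame sr)

/-- Backward induction for finite strategy profiles. -/
inductive BI : FinStratProf → Prop
  | leaf (f : Payoffs) : BI (FinStratProf.leaf f)
  | node (p : Agent) (c : Choice) (sd sr : FinStratProf) :
      BI sd → BI sr →
      (c = Choice.d → fpayoff sd p ≥ fpayoff sr p) →
      (c = Choice.r → fpayoff sr p ≥ fpayoff sd p) →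
      BI (FinStratProf.node p c sd sr)

/-- The family `F01` of finite truncations of the 0,1-game (cut after `B`). -/
inductive F01 : FinGame → Prop
  | base : F01 (FinGame.leaf f01)
  | step (g : FinGame) : F01 g →
      F01 (FinGame.node Agent.A (FinGame.leaf f01) (FinGame.node Agent.B (FinGame.leaf f10) g))

/-- `SF01`: agent B always continues, agent A does whatever she likes. -/
inductive SF01 : FinStratProf → Prop
  | base : SF01 (FinStratProf.leaf f01)
  | step (c : Choice) (s' : FinStratProf) : SF01 s' →
      SF01 (FinStratProf.node Agent.A c (FinStratProf.leaf f01)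
        (FinStratProf.node Agent.B Choice.r (FinStratProf.leaf f10) s'))

mutual
  /-- The family `K01` of finite truncations of the 0,1-game (cut after `A`). -/
  inductive K01 : FinGame → Prop
    | step (g : FinGame) : K01' g → K01 (FinGame.node Agent.A (FinGame.leaf f01) g)
  /-- The auxiliary family `K01'`. -/
  inductive K01' : FinGame → Prop
    | base : K01' (FinGame.leaf f10)
    | step (g : FinGame) : K01 g → K01' (FinGame.node Agent.B (FinGame.leaf f10) g)
end

mutual
  /-- `SK01`: agent A always continues, agent B does whatever she likes. -/
  inductive SK01 : FinStratProf → Prop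
    | step (s' : FinStratProf) : SK01' s' →
        SK01 (FinStratProf.node Agent.A Choice.r (FinStratProf.leaf f01) s')
  /-- The auxiliary predicate `SK01'`. -/
  inductive SK01' : FinStratProf → Prop
    | base : SK01' (FinStratProf.leaf f10)
    | step (c : Choice) (s' : FinStratProf) : SK01 s' →
        SK01' (FinStratProf.node Agent.B c (FinStratProf.leaf f10) s')
end

lemma strat_corec_node {α : Type} (F : α → StratF.Obj α) (a : α)
    (x : Agent ⊕ Choice) (k : Bool → α) (h : F a = ⟨Sum.inr x, k⟩) :
    PFunctor.M.corec F a =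
      stnode x (PFunctor.M.corec F (k true)) (PFunctor.M.corec F (k false)) := by
  have hd : (PFunctor.M.corec F a).dest
      = ⟨Sum.inr x, fun b => PFunctor.M.corec F (k b)⟩ := by
    rw [PFunctor.M.dest_corec, h]; rfl
  rw [← PFunctor.M.mk_dest (PFunctor.M.corec F a), hd]
  unfold stnode
  congr 1
  refine congrArg _ ?_
  funext b; cases b <;> rfl

/-- The code map from `g01Step` indices to `stAinfStep`/`stBinfStep` indices. -/
def escCode : Bool ⊕ Bool → ℕ
  | Sum.inl true => 0
  | Sum.inl false => 1
  | Sum.inr true => 2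
  | Sum.inr false => 3

lemma escalation_game (F : ℕ → StratF.Obj ℕ) (p : Agent)
    (h0 : st2gStep p (PFunctor.M.corec F 0)
      = ⟨Sum.inr Agent.A, fun (b : Bool) => PFunctor.M.corec F (if b then 2 else 1)⟩)
    (h1 : st2gStep p (PFunctor.M.corec F 1)
      = ⟨Sum.inr Agent.B, fun (b : Bool) => PFunctor.M.corec F (if b then 3 else 0)⟩)
    (h2 : st2gStep p (PFunctor.M.corec F 2)
      = ⟨Sum.inl f01, fun e => e.elim⟩)
    (h3 : st2gStep p (PFunctor.M.corec F 3)
      = ⟨Sum.inl f10, fun e => e.elim⟩) :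
    st2g (PFunctor.M.corec F 0) p = g01 := by
  apply PFunctor.M.bisim
    (fun x y => ∃ z, x = PFunctor.M.corec (st2gStep p) (PFunctor.M.corec F (escCode z))
      ∧ y = PFunctor.M.corec g01Step z)
  · rintro x y ⟨z, rfl, rfl⟩
    cases z with
    | inl b =>
      cases b
      · refine ⟨Sum.inr Agent.B,
          fun (b : Bool) => PFunctor.M.corec (st2gStep p) (PFunctor.M.corec F (if b then 3 else 0)),
          fun (b : Bool) => PFunctor.M.corec g01Step (if b then Sum.inr false else Sum.inl true),
          ?_, ?_, ?_⟩
        · rw [PFunctor.M.dest_corec, show escCode (Sum.inl false) = 1 from rfl, h1]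
          exact congrArg (Sigma.mk _) (funext fun b => by cases b <;> rfl)
        · rw [PFunctor.M.dest_corec]
          exact congrArg (Sigma.mk _) (funext fun b => by cases b <;> rfl)
        · intro b; cases b
          · exact ⟨Sum.inl true, rfl, rfl⟩
          · exact ⟨Sum.inr false, rfl, rfl⟩
      · refine ⟨Sum.inr Agent.A,
          fun (b : Bool) => PFunctor.M.corec (st2gStep p) (PFunctor.M.corec F (if b then 2 else 1)),
          fun (b : Bool) => PFunctor.M.corec g01Step (if b then Sum.inr true else Sum.inl false),
          ?_, ?_, ?_⟩
        · rw [PFunctor.M.dest_corec, show escCode (Sum.inl true) = 0 from rfl, h0]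
          exact congrArg (Sigma.mk _) (funext fun b => by cases b <;> rfl)
        · rw [PFunctor.M.dest_corec]
          exact congrArg (Sigma.mk _) (funext fun b => by cases b <;> rfl)
        · intro b; cases b
          · exact ⟨Sum.inl false, rfl, rfl⟩
          · exact ⟨Sum.inr true, rfl, rfl⟩
    | inr b =>
      cases b
      · refine ⟨Sum.inl f10, fun e => e.elim, fun e => e.elim, ?_, ?_, ?_⟩
        · rw [PFunctor.M.dest_corec, show escCode (Sum.inr false) = 3 from rfl, h3]
          exact congrArg (Sigma.mk _) (funext fun e => e.elim)
        · rw [PFunctor.M.dest_corec]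
          exact congrArg (Sigma.mk _) (funext fun e => e.elim)
        · intro e; exact e.elim
      · refine ⟨Sum.inl f01, fun e => e.elim, fun e => e.elim, ?_, ?_, ?_⟩
        · rw [PFunctor.M.dest_corec, show escCode (Sum.inr true) = 2 from rfl, h2]
          exact congrArg (Sigma.mk _) (funext fun e => e.elim)
        · rw [PFunctor.M.dest_corec]
          exact congrArg (Sigma.mk _) (funext fun e => e.elim)
        · intro e; exact e.elim
  · exact ⟨Sum.inl true, rfl, rfl⟩

/-- the escalation strategies of the 0,1-game are full and have the
right game. -/
theorem escalation_strategies_full_and_game :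
    Full Agent.A stAinf ∧ Full Agent.B stBinf ∧
      st2g stAinf Agent.A = g01 ∧ st2g stBinf Agent.B = g01 := by
  have hA0 : (PFunctor.M.corec stAinfStep 0).dest
      = ⟨Sum.inr (Sum.inr Choice.r), fun (b : Bool) => PFunctor.M.corec stAinfStep (if b then 2 else 1)⟩ := by
    rw [PFunctor.M.dest_corec]; rfl
  have hA1 : (PFunctor.M.corec stAinfStep 1).dest
      = ⟨Sum.inr (Sum.inl Agent.B), fun (b : Bool) => PFunctor.M.corec stAinfStep (if b then 3 else 0)⟩ := by
    rw [PFunctor.M.dest_corec]; rfl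
  have hA2 : (PFunctor.M.corec stAinfStep 2).dest
      = ⟨Sum.inl f01, fun e => e.elim⟩ := by
    rw [PFunctor.M.dest_corec]
    exact congrArg (Sigma.mk _) (funext fun e => e.elim)
  have hA3 : (PFunctor.M.corec stAinfStep 3).dest
      = ⟨Sum.inl f10, fun e => e.elim⟩ := by
    rw [PFunctor.M.dest_corec]
    exact congrArg (Sigma.mk _) (funext fun e => e.elim)
  have hB0 : (PFunctor.M.corec stBinfStep 0).dest
      = ⟨Sum.inr (Sum.inl Agent.A), fun (b : Bool) => PFunctor.M.corec stBinfStep (if b then 2 else 1)⟩ := by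
    rw [PFunctor.M.dest_corec]; rfl
  have hB1 : (PFunctor.M.corec stBinfStep 1).dest
      = ⟨Sum.inr (Sum.inr Choice.r), fun (b : Bool) => PFunctor.M.corec stBinfStep (if b then 3 else 0)⟩ := by
    rw [PFunctor.M.dest_corec]; rfl
  have hB2 : (PFunctor.M.corec stBinfStep 2).dest
      = ⟨Sum.inl f01, fun e => e.elim⟩ := by
    rw [PFunctor.M.dest_corec]
    exact congrArg (Sigma.mk _) (funext fun e => e.elim)
  have hB3 : (PFunctor.M.corec stBinfStep 3).dest
      = ⟨Sum.inl f10, fun e => e.elim⟩ := by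
    rw [PFunctor.M.dest_corec]
    exact congrArg (Sigma.mk _) (funext fun e => e.elim)
  have leafA2 : PFunctor.M.corec stAinfStep 2 = stleaf f01 := by
    rw [← PFunctor.M.mk_dest (PFunctor.M.corec stAinfStep 2), hA2]; rfl
  have leafA3 : PFunctor.M.corec stAinfStep 3 = stleaf f10 := by
    rw [← PFunctor.M.mk_dest (PFunctor.M.corec stAinfStep 3), hA3]; rfl
  have leafB2 : PFunctor.M.corec stBinfStep 2 = stleaf f01 := by
    rw [← PFunctor.M.mk_dest (PFunctor.M.corec stBinfStep 2), hB2]; rfl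
  have leafB3 : PFunctor.M.corec stBinfStep 3 = stleaf f10 := by
    rw [← PFunctor.M.mk_dest (PFunctor.M.corec stBinfStep 3), hB3]; rfl
  refine ⟨?_, ?_, ?_, ?_⟩
  · -- Full A stAinf
    refine ⟨fun t => t = PFunctor.M.corec stAinfStep 0 ∨ t = PFunctor.M.corec stAinfStep 1
      ∨ t = PFunctor.M.corec stAinfStep 2 ∨ t = PFunctor.M.corec stAinfStep 3,
      Or.inl rfl, ?_⟩
    rintro t (rfl | rfl | rfl | rfl)
    · right
      exact ⟨Sum.inr Choice.r, _, _,
        strat_corec_node stAinfStep 0 (Sum.inr Choice.r) (fun b => if b then 2 else 1) rfl,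
        by simp, Or.inr (Or.inr (Or.inl rfl)), Or.inr (Or.inl rfl)⟩
    · right
      exact ⟨Sum.inl Agent.B, _, _,
        strat_corec_node stAinfStep 1 (Sum.inl Agent.B) (fun b => if b then 3 else 0) rfl,
        by simp, Or.inr (Or.inr (Or.inr rfl)), Or.inl rfl⟩
    · exact Or.inl ⟨f01, leafA2⟩
    · exact Or.inl ⟨f10, leafA3⟩
  · -- Full B stBinf
    refine ⟨fun t => t = PFunctor.M.corec stBinfStep 0 ∨ t = PFunctor.M.corec stBinfStep 1
      ∨ t = PFunctor.M.corec stBinfStep 2 ∨ t = PFunctor.M.corec stBinfStep 3,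
      Or.inl rfl, ?_⟩
    rintro t (rfl | rfl | rfl | rfl)
    · right
      exact ⟨Sum.inl Agent.A, _, _,
        strat_corec_node stBinfStep 0 (Sum.inl Agent.A) (fun b => if b then 2 else 1) rfl,
        by simp, Or.inr (Or.inr (Or.inl rfl)), Or.inr (Or.inl rfl)⟩
    · right
      exact ⟨Sum.inr Choice.r, _, _,
        strat_corec_node stBinfStep 1 (Sum.inr Choice.r) (fun b => if b then 3 else 0) rfl,
        by simp, Or.inr (Or.inr (Or.inr rfl)), Or.inl rfl⟩
    · exact Or.inl ⟨f01, leafB2⟩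
    · exact Or.inl ⟨f10, leafB3⟩
  · -- st2g stAinf A = g01
    refine escalation_game stAinfStep Agent.A ?_ ?_ ?_ ?_ <;>
      · simp only [st2gStep, hA0, hA1, hA2, hA3]
        try rfl
  · -- st2g stBinf B = g01
    refine escalation_game stBinfStep Agent.B ?_ ?_ ?_ ?_ <;>
      · simp only [st2gStep, hB0, hB1, hB2, hB3]
        try rfl
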